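/- If f = p^r is a power of a single monic irreducible polynomial p of degree d over F_q, then X_{dℓ}(σ_f) = 1/ℓ for every 1 ≤ ℓ ≤ r, and X_m(σ_f) = 0 whenever d does not divide m or m > dr. -/

import Mathlib

open Polynomial UniqueFactorizationMonoid

/-- `cycleCount σ k` is the number of `k`-cycles of `σ` (with `1`-cycles = fixed points). -/
def cycleCount {α : Type*} [Fintype α] [DecidableEq α] (σ : Equiv.Perm α) (k : ℕ) : ℕ :=
  if k = 1 then (Finset.univ.filter fun x => σ x = x).card else Multiset.count k σ.cycleType

/-- The permutation of the grid `{1,…,r} × Z/dZ` acting by `h k` on the fiber over `k`. -/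
def gridPerm (r d : ℕ) (h : Fin d → Equiv.Perm (Fin r)) : Equiv.Perm (Fin r × Fin d) where
  toFun p := (h p.2 p.1, p.2)
  invFun p := ((h p.2).symm p.1, p.2)
  left_inv p := by simp
  right_inv p := by simp

variable {F : Type*} [Field F] [DecidableEq F]

/-- The finite set of distinct monic irreducible factors of `f`. -/
noncomputable def facSet (f : F[X]) : Finset F[X] := (normalizedFactors f).toFinset

/-- The set of roots of `f` with multiplicity: `T_f = {(p,j,k) : p ∣ f irreducible,
1 ≤ j ≤ r_p, k ∈ Z/d_pZ}` where `r_p` is the multiplicity of `p` in `f` and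
`d_p = deg p`. -/
abbrev Tf (f : F[X]) :=
  Σ p : {x // x ∈ facSet f},
    Fin ((normalizedFactors f).count (p : F[X])) × Fin ((p : F[X]).natDegree)

/-- The Young subgroup `H_f = ∏ᵢ (S_{rᵢ})^{dᵢ}` stabilizing the root tuple of `f`. -/
abbrev Hf (f : F[X]) :=
  ∀ p : {x // x ∈ facSet f},
    Fin ((p : F[X]).natDegree) → Equiv.Perm (Fin ((normalizedFactors f).count (p : F[X])))

/-- The lift `τ_f(i,j,k) = (i,j,k+1)` of the Frobenius action on the roots of `f`. -/
noncomputable def tauF (f : F[X]) : Equiv.Perm (Tf f) :=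
  Equiv.sigmaCongrRight fun _ => (Equiv.refl _).prodCongr (finRotate _)

/-- The permutation of `T_f` induced by `h ∈ H_f`. -/
noncomputable def hPermF (f : F[X]) (h : Hf f) : Equiv.Perm (Tf f) :=
  Equiv.sigmaCongrRight fun p => gridPerm _ _ (h p)


/-!
For `f = p ^ r`, the permutation `τ_f h` is the skew product `(i, k) ↦ (h_k i, k + 1)` on
`Fin r × Z/dZ`. Its `d`-th power preserves every fiber `Fin r × {k}` and acts there by the
monodromy `h_{k+d-1} ⋯ h_k`, so the period of `(i, k)` is `d` times the period of `i` under the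
monodromy; in particular every period lies in `{d, 2d, …, dr}`. As `h` ranges over `(S_r)^d`,
the monodromy is uniformly distributed in `S_r`, and the cycle through a given point of a uniform
permutation in `S_r` has uniform length in `{1, …, r}`. Counting the pairs `(h, x)` with `x` of
period `dℓ` therefore gives `dℓ · E[X_{dℓ}] = d`.
-/

open Equiv Equiv.Perm Function Finset

theorem Function.Semiconj.minimalPeriod_eq {α β : Type*} {fa : α → α} {fb : β → β} {g : α → β}
    (h : Semiconj g fa fb) (hg : Injective g) (x : α) :
    minimalPeriod fb (g x) = minimalPeriod fa x :=
  minimalPeriod_eq_minimalPeriod_iff.mpr fun n => by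
    simp only [IsPeriodicPt, IsFixedPt, ← h.iterate_right n x, hg.eq_iff]

namespace Equiv.Perm

variable {α β : Type*}

theorem minimalPeriod_pos [Finite α] (σ : Perm α) (x : α) : 0 < minimalPeriod σ x :=
  minimalPeriod_pos_of_mem_periodicPts (σ.injective.mem_periodicPts x)

theorem minimalPeriod_permCongr (e : α ≃ β) (σ : Perm α) (x : α) :
    minimalPeriod (e.permCongr σ) (e x) = minimalPeriod σ x :=
  Semiconj.minimalPeriod_eq (fun y => by simp [permCongr_apply]) e.injective x

variable [Fintype α] [DecidableEq α]

theorem minimalPeriod_eq_card_support_cycleOf {σ : Perm α} {x : α} (hx : σ x ≠ x) :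
    minimalPeriod σ x = #(σ.cycleOf x).support := by
  have hc := isCycle_cycleOf σ hx
  rw [← hc.orderOf, ← Nat.dvd_right_iff_eq]
  intro n
  rw [← isPeriodicPt_iff_minimalPeriod_dvd, orderOf_dvd_iff_pow_eq_one,
    hc.pow_eq_one_iff' (x := x) (by rwa [cycleOf_apply_self]), cycleOf_pow_apply_self,
    IsPeriodicPt, IsFixedPt, iterate_eq_pow]

theorem cycleCount_zero (σ : Perm α) : cycleCount σ 0 = 0 :=
  Multiset.count_eq_zero.mpr fun h => by have := two_le_of_mem_cycleType h; omega

theorem cycleCount_mul_eq_card_minimalPeriod (σ : Perm α) {k : ℕ} (hk : 1 ≤ k) :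
    cycleCount σ k * k = #{x | minimalPeriod σ x = k} := by
  obtain rfl | hk2 := hk.eq_or_lt
  · simp [cycleCount, minimalPeriod_eq_one_iff_isFixedPt, IsFixedPt]
  have hfix : ∀ x, minimalPeriod σ x = k → σ x ≠ x := fun x hx hfx => by
    rw [minimalPeriod_eq_one_iff_isFixedPt.mpr hfx] at hx
    omega
  have hcycles : ({x | minimalPeriod σ x = k} : Finset α) =
      {c ∈ σ.cycleFactorsFinset | #c.support = k}.biUnion support := by
    ext x
    simp only [mem_filter, mem_univ, true_and, mem_biUnion]
    constructor
    · intro hx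
      refine ⟨σ.cycleOf x, ⟨cycleOf_mem_cycleFactorsFinset_iff.mpr (mem_support.mpr (hfix x hx)),
        by rw [← minimalPeriod_eq_card_support_cycleOf (hfix x hx), hx]⟩, ?_⟩
      exact mem_support_cycleOf_iff.mpr ⟨SameCycle.refl _ _, mem_support.mpr (hfix x hx)⟩
    · rintro ⟨c, ⟨hc, rfl⟩, hxc⟩
      have hxσ := mem_support.mp (mem_cycleFactorsFinset_support_le hc hxc)
      rw [minimalPeriod_eq_card_support_cycleOf hxσ, ← cycle_is_cycleOf hxc hc]
  rw [hcycles, card_biUnion, sum_const_nat fun c hc => (mem_filter.mp hc).2, cycleCount,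
    if_neg hk2.ne', cycleType_def, Multiset.count_map, card, filter_val]
  · congr 2
    exact Multiset.filter_congr fun c _ => eq_comm
  · exact fun c hc c' hc' hne =>
      (cycleFactorsFinset_pairwise_disjoint σ (mem_filter.mp hc).1 (mem_filter.mp hc').1
        hne).disjoint_support

theorem cycleCount_eq_zero_of_forall_minimalPeriod_ne (σ : Perm α) {k : ℕ} (hk : 1 ≤ k)
    (h : ∀ x, minimalPeriod σ x ≠ k) : cycleCount σ k = 0 := by
  have := cycleCount_mul_eq_card_minimalPeriod σ hk
  rw [filter_false_of_mem fun x _ => h x, card_empty] at this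
  exact (Nat.mul_eq_zero.mp this).resolve_right (by omega)

theorem cycleCount_permCongr [Fintype β] [DecidableEq β] (e : α ≃ β) (σ : Perm α) (k : ℕ) :
    cycleCount (e.permCongr σ) k = cycleCount σ k := by
  obtain rfl | hk := k.eq_zero_or_pos
  · rw [cycleCount_zero, cycleCount_zero]
  refine Nat.eq_of_mul_eq_mul_right hk ?_
  rw [cycleCount_mul_eq_card_minimalPeriod _ hk, cycleCount_mul_eq_card_minimalPeriod _ hk]
  exact (card_equiv e fun x => by simp [minimalPeriod_permCongr]).symm

theorem minimalPeriod_decomposeFin_symm_zero {n : ℕ} (e : Perm (Fin n)) :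
    minimalPeriod (decomposeFin.symm (0, e)) 0 = 1 :=
  minimalPeriod_eq_one_iff_isFixedPt.mpr (decomposeFin_symm_apply_zero 0 e)

theorem minimalPeriod_decomposeFin_symm_succ {n : ℕ} (j : Fin n) (e : Perm (Fin n)) :
    minimalPeriod (decomposeFin.symm (j.succ, e)) 0 = minimalPeriod e j + 1 := by
  set σ := decomposeFin.symm (j.succ, e)
  set L := minimalPeriod e j
  have hL := e.minimalPeriod_pos j
  have hσ (t : ℕ) : σ (e^[t] j).succ = swap 0 j.succ (e^[t + 1] j).succ := by
    rw [decomposeFin_symm_apply_succ, iterate_succ_apply']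
  -- From `0`, `σ` runs through the `e`-cycle of `j` (shifted by `succ`) and returns to `0`
  -- only when that cycle closes.
  have horbit : ∀ t < L, σ^[t + 1] 0 = (e^[t] j).succ := by
    intro t
    induction t with
    | zero => intro; exact decomposeFin_symm_apply_zero _ e
    | succ t ih =>
      intro ht
      rw [iterate_succ_apply', ih (by omega), hσ, swap_apply_of_ne_of_ne (Fin.succ_ne_zero _)]
      exact fun h => not_isPeriodicPt_of_pos_of_lt_minimalPeriod (by omega) ht
        (Fin.succ_injective _ h)
  have hreturn : σ^[L + 1] 0 = 0 := by
    obtain ⟨t, ht⟩ : ∃ t, L = t + 1 := ⟨L - 1, by omega⟩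
    rw [iterate_succ_apply', ht, horbit t (by omega), hσ, ← ht, iterate_minimalPeriod,
      swap_apply_right]
  refine le_antisymm (IsPeriodicPt.minimalPeriod_le (by omega) hreturn) ?_
  by_contra! hlt
  obtain ⟨t, ht⟩ : ∃ t, minimalPeriod σ 0 = t + 1 := ⟨_ - 1, (Nat.sub_add_cancel
    (σ.minimalPeriod_pos 0)).symm⟩
  have := iterate_minimalPeriod (f := σ) (x := 0)
  rw [ht, horbit t (by omega)] at this
  exact Fin.succ_ne_zero _ this

theorem card_minimalPeriod_eq_card_minimalPeriod {n : ℕ} (i j : Fin n) (ℓ : ℕ) :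
    #{σ : Perm (Fin n) | minimalPeriod σ i = ℓ} = #{σ : Perm (Fin n) | minimalPeriod σ j = ℓ} :=
  card_equiv (permCongr (swap i j)) fun σ => by
    simp [← minimalPeriod_permCongr (swap i j) σ i]

theorem card_minimalPeriod_eq_factorial {n ℓ : ℕ} (i : Fin n) (hℓ : 1 ≤ ℓ) (hℓn : ℓ ≤ n) :
    #{σ : Perm (Fin n) | minimalPeriod σ i = ℓ} = (n - 1).factorial := by
  induction n generalizing ℓ with
  | zero => exact i.elim0
  | succ n ih =>
    rw [card_minimalPeriod_eq_card_minimalPeriod i 0, ← card_equiv decomposeFin.symm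
      (s := {x | minimalPeriod (decomposeFin.symm x) 0 = ℓ}) (by simp),
      card_filter, Fintype.sum_prod_type, Fin.sum_univ_succ]
    simp_rw [← card_filter, minimalPeriod_decomposeFin_symm_zero,
      minimalPeriod_decomposeFin_symm_succ]
    obtain rfl | ⟨l, rfl, hl⟩ : ℓ = 1 ∨ ∃ l, ℓ = l + 1 ∧ 1 ≤ l := by
      rcases ℓ with _ | _ | l <;> simp_all
    · simp [(minimalPeriod_pos _ _).ne', Fintype.card_perm]
    · simp_rw [add_left_inj, ih _ hl (by omega)]
      simp [Nat.mul_factorial_pred (show n ≠ 0 by omega), (show l ≠ 0 by omega)]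

end Equiv.Perm

section PiGroup

variable {G ι M : Type*} [Fintype G] [Fintype ι] [DecidableEq ι] [AddCommMonoid M]

theorem Fintype.sum_comp_eval (k : ι) (F : G → M) :
    ∑ h : ι → G, F (h k) = Fintype.card G ^ (Fintype.card ι - 1) • ∑ g, F g := by
  rw [Fintype.sum_equiv (funSplitAt k G) _ (fun x => F x.1) fun h => by simp,
    Fintype.sum_prod_type, smul_sum]
  simp [Fintype.card_subtype_compl]

-- Left-multiplying the `k`-th coordinate by a factor independent of it permutes `ι → G`.
theorem Fintype.sum_comp_mul_eval [Group G] (k : ι) (A : (ι → G) → G)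
    (hA : ∀ (h : ι → G) g, A (update h k g) = A h) (F : G → M) :
    ∑ h : ι → G, F (A h * h k) = ∑ h : ι → G, F (h k) := by
  let e : (ι → G) ≃ (ι → G) :=
    { toFun h := update h k (A h * h k)
      invFun h := update h k ((A h)⁻¹ * h k)
      left_inv h := by simp [hA]
      right_inv h := by simp [hA] }
  exact Fintype.sum_equiv e (fun h => F (A h * h k)) (fun h => F (h k)) fun h => by simp [e]

end PiGroup

theorem minimalPeriod_finRotate {d : ℕ} (k : Fin d) : minimalPeriod (finRotate d) k = d := by
  rcases d with _ | _ | d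
  · exact k.elim0
  · exact minimalPeriod_eq_one_iff_isFixedPt.mpr (Subsingleton.elim (α := Fin 1) _ _)
  · have hk : finRotate (d + 2) k ≠ k := by
      rw [← Perm.mem_support, support_finRotate]
      exact mem_univ k
    rw [minimalPeriod_eq_card_support_cycleOf hk, isCycle_finRotate.cycleOf_eq hk,
      support_finRotate, card_univ, Fintype.card_fin]

theorem iterate_finRotate_self {d : ℕ} (k : Fin d) : (finRotate d)^[d] k = k := by
  have := iterate_minimalPeriod (f := finRotate d) (x := k)
  rwa [minimalPeriod_finRotate] at this

section ShiftGrid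

variable {r d : ℕ}

def shiftGridPerm (h : Fin d → Perm (Fin r)) : Perm (Fin r × Fin d) :=
  (Equiv.refl (Fin r)).prodCongr (finRotate d) * gridPerm r d h

theorem shiftGridPerm_apply (h : Fin d → Perm (Fin r)) (x : Fin r × Fin d) :
    shiftGridPerm h x = (h x.2 x.1, finRotate d x.2) :=
  rfl

def fiberProd (h : Fin d → Perm (Fin r)) (k : Fin d) : ℕ → Perm (Fin r)
  | 0 => 1
  | n + 1 => h ((finRotate d)^[n] k) * fiberProd h k n

theorem iterate_shiftGridPerm_apply (h : Fin d → Perm (Fin r)) (i : Fin r) (k : Fin d) (n : ℕ) :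
    (shiftGridPerm h)^[n] (i, k) = (fiberProd h k n i, (finRotate d)^[n] k) := by
  induction n with
  | zero => rfl
  | succ n ih => rw [iterate_succ_apply', ih, shiftGridPerm_apply, iterate_succ_apply']; rfl

def monodromy (h : Fin d → Perm (Fin r)) (k : Fin d) : Perm (Fin r) :=
  fiberProd h k d

theorem semiconj_monodromy (h : Fin d → Perm (Fin r)) (k : Fin d) :
    Semiconj (fun i => (i, k)) (monodromy h k) (shiftGridPerm h)^[d] := fun i => by
  rw [iterate_shiftGridPerm_apply, iterate_finRotate_self]
  rfl

theorem minimalPeriod_shiftGridPerm [NeZero d] (h : Fin d → Perm (Fin r)) (i : Fin r)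
    (k : Fin d) :
    minimalPeriod (shiftGridPerm h) (i, k) = d * minimalPeriod (monodromy h k) i := by
  have hdvd : d ∣ minimalPeriod (shiftGridPerm h) (i, k) := by
    have := ((isPeriodicPt_minimalPeriod (shiftGridPerm h) (i, k)).map (g := Prod.snd)
      (fb := finRotate d) fun _ => rfl).minimalPeriod_dvd
    rwa [minimalPeriod_finRotate] at this
  rw [← (semiconj_monodromy h k).minimalPeriod_eq (Prod.mk_left_injective k),
    minimalPeriod_iterate_eq_div_gcd (NeZero.ne d), Nat.gcd_eq_right hdvd,
    Nat.mul_div_cancel' hdvd]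

theorem fiberProd_update (h : Fin d → Perm (Fin r)) (k : Fin d) (σ : Perm (Fin r)) {n : ℕ}
    (hn : 1 ≤ n) (hnd : n ≤ d) :
    fiberProd (update h k σ) k n = fiberProd (update h k 1) k n * σ := by
  induction n, hn using Nat.le_induction with
  | base => simp [fiberProd]
  | succ n hn ih =>
    have hne : (finRotate d)^[n] k ≠ k := fun h =>
      not_isPeriodicPt_of_pos_of_lt_minimalPeriod (by omega)
        (by rw [minimalPeriod_finRotate]; omega) h
    simp only [fiberProd, update_of_ne hne, ih (by omega), mul_assoc]

theorem sum_comp_monodromy {M : Type*} [AddCommMonoid M] [NeZero d] (k : Fin d)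
    (F : Perm (Fin r) → M) :
    ∑ h : Fin d → Perm (Fin r), F (monodromy h k) = r.factorial ^ (d - 1) • ∑ σ, F σ := by
  have hsplit (h : Fin d → Perm (Fin r)) : monodromy h k = monodromy (update h k 1) k * h k := by
    conv_lhs => rw [← update_eq_self k h]
    exact fiberProd_update h k (h k) NeZero.one_le le_rfl
  rw [Fintype.sum_congr _ _ fun h => congrArg F (hsplit h),
    Fintype.sum_comp_mul_eval k _ fun h g => by rw [update_idem], Fintype.sum_comp_eval,
    Fintype.card_perm, Fintype.card_fin, Fintype.card_fin]

end ShiftGrid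

section ShiftGridCount

variable {r d : ℕ} [NeZero d]

theorem sum_card_minimalPeriod_shiftGridPerm {ℓ : ℕ} (hℓ : 1 ≤ ℓ) (hℓr : ℓ ≤ r) :
    ∑ h : Fin d → Perm (Fin r), #{x | minimalPeriod (shiftGridPerm h) x = d * ℓ}
      = d * r.factorial ^ d := by
  have hpoint (i : Fin r) (k : Fin d) : #{h | minimalPeriod (shiftGridPerm h) (i, k) = d * ℓ}
      = r.factorial ^ (d - 1) * (r - 1).factorial := by
    simp_rw [← card_minimalPeriod_eq_factorial i hℓ hℓr, card_filter, minimalPeriod_shiftGridPerm,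
      Nat.mul_left_cancel_iff (Nat.pos_of_ne_zero (NeZero.ne d))]
    exact sum_comp_monodromy k fun σ => if minimalPeriod σ i = ℓ then 1 else 0
  obtain ⟨e, rfl⟩ : ∃ e, d = e + 1 := ⟨d - 1, by have := NeZero.ne d; omega⟩
  simp_rw [card_filter]
  rw [sum_comm, Fintype.sum_prod_type]
  simp_rw [← card_filter, hpoint, sum_const, card_univ, Fintype.card_fin, smul_eq_mul,
    Nat.add_sub_cancel, ← Nat.mul_factorial_pred (show r ≠ 0 by omega)]
  ring

theorem sum_cycleCount_shiftGridPerm_mul {ℓ : ℕ} (hℓ : 1 ≤ ℓ) (hℓr : ℓ ≤ r) :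
    (∑ h : Fin d → Perm (Fin r), cycleCount (shiftGridPerm h) (d * ℓ)) * ℓ = r.factorial ^ d := by
  have hd : 0 < d := Nat.pos_of_ne_zero (NeZero.ne d)
  refine Nat.eq_of_mul_eq_mul_left hd ?_
  rw [← sum_card_minimalPeriod_shiftGridPerm hℓ hℓr, mul_left_comm, sum_mul]
  exact sum_congr rfl fun h _ =>
    cycleCount_mul_eq_card_minimalPeriod _ (Nat.one_le_iff_ne_zero.mpr (by positivity))

theorem cycleCount_shiftGridPerm_eq_zero (h : Fin d → Perm (Fin r)) {m : ℕ}
    (hm : ¬ d ∣ m ∨ d * r < m) : cycleCount (shiftGridPerm h) m = 0 := by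
  have hm1 : 1 ≤ m := Nat.pos_of_ne_zero (by rintro rfl; simp at hm)
  refine cycleCount_eq_zero_of_forall_minimalPeriod_ne _ hm1 fun ⟨i, k⟩ hik => ?_
  rw [minimalPeriod_shiftGridPerm] at hik
  have hle : minimalPeriod (monodromy h k) i ≤ r := by
    simpa using minimalPeriod_le_card (f := monodromy h k) (x := i)
  rcases hm with hm | hm
  · exact hm ⟨_, hik.symm⟩
  · have := Nat.mul_le_mul_left d hle
    omega

theorem inv_card_mul_sum_cycleCount_shiftGridPerm {ℓ : ℕ} (hℓ : 1 ≤ ℓ) (hℓr : ℓ ≤ r) :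
    ((Fintype.card (Fin d → Perm (Fin r)) : ℚ))⁻¹ *
        ∑ h : Fin d → Perm (Fin r), (cycleCount (shiftGridPerm h) (d * ℓ) : ℚ) = (ℓ : ℚ)⁻¹ := by
  have hsum := congrArg (Nat.cast (R := ℚ)) (sum_cycleCount_shiftGridPerm_mul (d := d) hℓ hℓr)
  push_cast at hsum
  have hℓ0 : (ℓ : ℚ) ≠ 0 := by positivity
  rw [Fintype.card_fun, Fintype.card_perm, Fintype.card_fin, Fintype.card_fin, Nat.cast_pow,
    (eq_div_iff hℓ0).mpr hsum]
  field_simp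

end ShiftGridCount

theorem cycleCount_tauF_mul_hPermF {f : F[X]} [Unique {x // x ∈ facSet f}] (h : Hf f) (n : ℕ) :
    cycleCount (tauF f * hPermF f h) n = cycleCount (shiftGridPerm (h default)) n := by
  rw [← cycleCount_permCongr (uniqueSigma _)]
  congr 1

theorem stmt16_general (p : F[X]) (hp : p.Monic) (hirr : Irreducible p)
    (r d : ℕ) (hr : 1 ≤ r) (hd : d = p.natDegree) :
    (∀ ℓ, 1 ≤ ℓ → ℓ ≤ r →
        ((Fintype.card (Hf (p ^ r)) : ℚ))⁻¹ *
            ∑ h : Hf (p ^ r), (cycleCount (tauF (p ^ r) * hPermF (p ^ r) h) (d * ℓ) : ℚ)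
          = (ℓ : ℚ)⁻¹) ∧
    (∀ m, (¬ d ∣ m ∨ d * r < m) →
        ((Fintype.card (Hf (p ^ r)) : ℚ))⁻¹ *
            ∑ h : Hf (p ^ r), (cycleCount (tauF (p ^ r) * hPermF (p ^ r) h) m : ℚ)
          = 0) := by
  subst hd
  have hfactors : normalizedFactors (p ^ r) = Multiset.replicate r p := by
    rw [normalizedFactors_pow, normalizedFactors_irreducible hirr, hp.normalize_eq_self,
      Multiset.nsmul_singleton]
  have hcount : (normalizedFactors (p ^ r)).count p = r := by
    rw [hfactors, Multiset.count_replicate_self]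
  have hfacSet : facSet (p ^ r) = {p} := by
    rw [facSet, hfactors, Multiset.toFinset_replicate, if_neg (by omega)]
  let _ : Unique {x // x ∈ facSet (p ^ r)} :=
    ⟨⟨⟨p, by simp [hfacSet]⟩⟩, fun ⟨q, hq⟩ => Subtype.ext (by simpa [hfacSet] using hq)⟩
  have : NeZero p.natDegree := ⟨hirr.natDegree_pos.ne'⟩
  have hsum (n : ℕ) : ∑ h : Hf (p ^ r), (cycleCount (tauF (p ^ r) * hPermF (p ^ r) h) n : ℚ) =
      ∑ g : Fin p.natDegree → Perm (Fin ((normalizedFactors (p ^ r)).count p)),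
        (cycleCount (shiftGridPerm g) n : ℚ) :=
    Fintype.sum_equiv (piUnique _) _ _ fun h => by rw [cycleCount_tauF_mul_hPermF]; rfl
  have hcard : Fintype.card (Hf (p ^ r)) =
      Fintype.card (Fin p.natDegree → Perm (Fin ((normalizedFactors (p ^ r)).count p))) :=
    Fintype.card_congr (piUnique _)
  simp_rw [hsum, hcard]
  refine ⟨fun ℓ hℓ hℓr => ?_, fun m hm => ?_⟩
  · exact inv_card_mul_sum_cycleCount_shiftGridPerm hℓ (by rwa [hcount])
  · rw [← hcount] at hm
    simp [cycleCount_shiftGridPerm_eq_zero _ hm]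

/-- If `f = p^r` with `p` monic irreducible of degree `d`, then `X_{dℓ}(σ_f) = 1/ℓ` for
`1 ≤ ℓ ≤ r`, and `X_m(σ_f) = 0` whenever `d ∤ m` or `m > dr`. -/
theorem stmt16 [Fintype F] (p : F[X]) (hp : p.Monic) (hirr : Irreducible p)
    (r d : ℕ) (hr : 1 ≤ r) (hd : d = p.natDegree) :
    (∀ ℓ, 1 ≤ ℓ → ℓ ≤ r →
        ((Fintype.card (Hf (p ^ r)) : ℚ))⁻¹ *
            ∑ h : Hf (p ^ r), (cycleCount (tauF (p ^ r) * hPermF (p ^ r) h) (d * ℓ) : ℚ)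
          = (ℓ : ℚ)⁻¹) ∧
    (∀ m, (¬ d ∣ m ∨ d * r < m) →
        ((Fintype.card (Hf (p ^ r)) : ℚ))⁻¹ *
            ∑ h : Hf (p ^ r), (cycleCount (tauF (p ^ r) * hPermF (p ^ r) h) m : ℚ)
          = 0) :=
  stmt16_general p hp hirr r d hr hd
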